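/- arXiv:0902.1932 — 6 statements merged into one kernel-verified Lean document; each statement's English description precedes it below -/
import Mathlib

section
/- Let c = (c_1, …, c_m) be a cardinality sequence and let F ⊆ E with c_p < r(F) < c_{p+1} for some p ∈ {1, …, m−1}. Then the rank induced forbidden set inequality associated with F is valid for every incidence vector of an independent set of feasible cardinality: for every independent set I of M with |I| ≤ c_p or |I| ≥ c_{p+1}, the vector χ^I satisfies (c_{p+1} − r(F))·χ^I(F) − (r(F) − c_p)·χ^I(E∖F) ≤ c_p·(c_{p+1} − r(F)). Consequently the inequality is valid for the cardinality constrained matroid polytope P^c(E). -/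
open Finset

/-- A (loopless) matroid on a finite ground set, given by its independent sets. -/
structure FinMatroid (α : Type*) [Fintype α] [DecidableEq α] where
  Indep : Finset α → Prop
  empty_indep : Indep ∅
  subset_indep : ∀ ⦃I J : Finset α⦄, Indep J → I ⊆ J → Indep I
  exchange : ∀ ⦃I J : Finset α⦄, Indep I → Indep J → I.card < J.card →
    ∃ e ∈ J \ I, Indep (insert e I)
  loopless : ∀ e : α, Indep {e}

variable {α : Type*} [Fintype α] [DecidableEq α]

open Classical in
/-- The rank of a set: the maximum cardinality of an independent subset. -/
noncomputable def FinMatroid.r (M : FinMatroid α) (F : Finset α) : ℕ :=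
  (F.powerset.filter M.Indep).sup Finset.card

/-- incidence vector -/
noncomputable def incVec (I : Finset α) : α → ℝ := fun e => if e ∈ I then 1 else 0

/-- x(S) = ∑_{e ∈ S} x_e -/
noncomputable def fsum (x : α → ℝ) (S : Finset α) : ℝ := ∑ e ∈ S, x e

/-- closed set -/
def FinMatroid.ClosedSet (M : FinMatroid α) (F : Finset α) : Prop :=
  ∀ e ∉ F, M.r F < M.r (insert e F)

/-- F is separable -/
def FinMatroid.Separable (M : FinMatroid α) (F : Finset α) : Prop :=
  ∃ F₁ F₂ : Finset α, F₁ ≠ ∅ ∧ F₂ ≠ ∅ ∧ Disjoint F₁ F₂ ∧ F₁ ∪ F₂ = F ∧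
    M.r F₁ + M.r F₂ ≤ M.r F

def FinMatroid.Inseparable (M : FinMatroid α) (F : Finset α) : Prop :=
  ¬ M.Separable F

/-- the k-rank r^k(F) = k - r(E \ F), as an integer -/
noncomputable def FinMatroid.krank (M : FinMatroid α) (k : ℕ) (F : Finset α) : ℤ :=
  (k : ℤ) - (M.r Fᶜ : ℤ)

/-- F is k-separable -/
noncomputable def FinMatroid.kSeparable (M : FinMatroid α) (k : ℕ) (F : Finset α) : Prop :=
  ∃ F₁ F₂ : Finset α, F₁ ≠ ∅ ∧ F₂ ≠ ∅ ∧ Disjoint F₁ F₂ ∧ F₁ ∪ F₂ = F ∧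
    M.krank k F₁ + M.krank k F₂ = M.krank k F

noncomputable def FinMatroid.kInseparable (M : FinMatroid α) (k : ℕ) (F : Finset α) : Prop :=
  ¬ M.kSeparable k F

/-- convex hull of incidence vectors of independent sets of cardinality exactly k -/
noncomputable def exactPolytope (M : FinMatroid α) (k : ℕ) : Set (α → ℝ) :=
  convexHull ℝ {x | ∃ I : Finset α, M.Indep I ∧ I.card = k ∧ x = incVec I}

/-- the cardinality constrained matroid polytope P^c(E) -/
noncomputable def cardPolytope (M : FinMatroid α) {m : ℕ} (c : Fin m → ℕ) : Set (α → ℝ) :=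
  convexHull ℝ {x | ∃ I : Finset α, M.Indep I ∧ (∃ p : Fin m, I.card = c p) ∧ x = incVec I}

/-- dimension of (the affine hull of) a subset of ℝ^E -/
noncomputable def polyDim (s : Set (α → ℝ)) : ℕ :=
  Module.finrank ℝ (affineSpan ℝ s).direction

/-- `a · x ≤ a₀` defines a facet of `P` -/
noncomputable def IsFacet (P : Set (α → ℝ)) (a : α → ℝ) (a₀ : ℝ) : Prop :=
  (∀ x ∈ P, ∑ e, a e * x e ≤ a₀) ∧
  polyDim {x ∈ P | ∑ e, a e * x e = a₀} + 1 = polyDim P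

lemma fsum_incVec {ι : Type*} [DecidableEq ι] (I S : Finset ι) : fsum (incVec I) S = #(I ∩ S) := by
  simp only [fsum, incVec, Finset.sum_boole, Finset.filter_mem_eq_inter, Finset.inter_comm]

lemma isLinearMap_fsum_sub_fsum {ι : Type*} (a b : ℝ) (S T : Finset ι) :
    IsLinearMap ℝ fun x : ι → ℝ => a * fsum x S - b * fsum x T where
  map_add x y := by simp only [fsum, Pi.add_apply, Finset.sum_add_distrib]; ring
  map_smul t x := by simp only [fsum, Pi.smul_apply, smul_eq_mul, ← Finset.mul_sum]; ring

lemma FinMatroid.card_inter_le_r (M : FinMatroid α) {I : Finset α} (hI : M.Indep I)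
    (F : Finset α) : #(I ∩ F) ≤ M.r F := by
  classical
  refine Finset.le_sup (f := Finset.card) (Finset.mem_filter.2 ⟨?_, ?_⟩)
  · exact Finset.mem_powerset.2 Finset.inter_subset_right
  · exact M.subset_indep hI Finset.inter_subset_left

/- With `a = |I ∩ F|` and `b = |I \ F|`: the bound is tight at `(a, b) = (c, 0)` and
`(r, d - r)`, and fails at `(r, 0)` when `c < r < d`, which is why `a + b` must avoid `(c, d)`. -/
lemma forbidden_form_le {a b r c d : ℝ} (hb : 0 ≤ b) (ha : a ≤ r) (hcr : c ≤ r) (hrd : r ≤ d)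
    (hcard : a + b ≤ c ∨ d ≤ a + b) : (d - r) * a - (r - c) * b ≤ c * (d - r) := by
  rcases hcard with h | h <;> nlinarith

theorem FinMatroid.forbidden_form_incVec_le (M : FinMatroid α) {I : Finset α} (hI : M.Indep I)
    {F : Finset α} {c d : ℕ} (hc : c ≤ M.r F) (hd : M.r F ≤ d) (hcard : #I ≤ c ∨ d ≤ #I) :
    ((d : ℝ) - M.r F) * fsum (incVec I) F - ((M.r F : ℝ) - c) * fsum (incVec I) Fᶜ
      ≤ (c : ℝ) * ((d : ℝ) - M.r F) := by
  have hsplit : (#(I ∩ F) : ℝ) + #(I \ F) = #I := by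
    exact_mod_cast Finset.card_inter_add_card_sdiff I F
  rw [fsum_incVec, fsum_incVec, ← Finset.sdiff_eq_inter_compl]
  refine forbidden_form_le (Nat.cast_nonneg _) (by exact_mod_cast M.card_inter_le_r hI F)
    (by exact_mod_cast hc) (by exact_mod_cast hd) ?_
  rw [hsplit]
  exact_mod_cast hcard

lemma Monotone.apply_le_or_apply_succ_le {m : ℕ} {c : Fin m → ℕ} (hc : Monotone c) (p q : Fin m)
    (hp : p.val + 1 < m) : c q ≤ c p ∨ c ⟨p.val + 1, hp⟩ ≤ c q := by
  rcases le_or_gt q p with hqp | hpq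
  · exact .inl (hc hqp)
  · exact .inr (hc (Fin.mk_le_of_le_val hpq))

/-- validity of the rank induced forbidden set inequality. -/
theorem forbidden_set_inequality_valid {α : Type*} [Fintype α] [DecidableEq α]
    (M : FinMatroid α)
    {m : ℕ} (c : Fin m → ℕ) (hmono : StrictMono c)
    (F : Finset α) (p : Fin m) (hp : p.val + 1 < m)
    (h1 : c p < M.r F) (h2 : M.r F < c ⟨p.val + 1, hp⟩) :
    (∀ I : Finset α, M.Indep I → (I.card ≤ c p ∨ c ⟨p.val + 1, hp⟩ ≤ I.card) →
      ((c ⟨p.val + 1, hp⟩ : ℝ) - M.r F) * fsum (incVec I) F - ((M.r F : ℝ) - c p) * fsum (incVec I) Fᶜ ≤ (c p : ℝ) * ((c ⟨p.val + 1, hp⟩ : ℝ) - M.r F)) ∧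
    (∀ x ∈ cardPolytope M c, ((c ⟨p.val + 1, hp⟩ : ℝ) - M.r F) * fsum x F - ((M.r F : ℝ) - c p) * fsum x Fᶜ ≤ (c p : ℝ) * ((c ⟨p.val + 1, hp⟩ : ℝ) - M.r F)) := by
  have hvalid := fun I (hI : M.Indep I) => M.forbidden_form_incVec_le hI h1.le h2.le
  refine ⟨hvalid, fun x hx => convexHull_min ?_
    (convex_halfSpace_le (isLinearMap_fsum_sub_fsum _ _ F Fᶜ) _) hx⟩
  rintro _ ⟨I, hI, ⟨q, hq⟩, rfl⟩
  exact hvalid I hI (hq ▸ hmono.monotone.apply_le_or_apply_succ_le p q hp)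
end

section
/- For every natural number k with k ≤ r(E), the convex hull of the incidence vectors of the independent sets of M of cardinality exactly k equals the set of all x ∈ ℝ^E satisfying x(F) ≤ r(F) for all nonempty F ⊆ E, x(E) = k, and x_e ≥ 0 for all e ∈ E. -/
open Finset

variable {α : Type*} [Fintype α] [DecidableEq α]

/-! The inclusion `⊆` holds because the right-hand side is convex and contains every incidence
vector. For `⊇`, by separation it suffices that every linear functional `w` satisfies
`w · x ≤ w(B)` for some independent `B` with `|B| = k`. Such a `B` is produced by the greedy
algorithm for the truncation of `M` to rank `k`, run in order of decreasing weight: it meets every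
upper level set `S` of `w` in `min (r S) k ≥ x(S)` elements, and Abel summation along the levels
turns these inequalities into `w · x ≤ w(B)`. -/

theorem mem_convexHull_of_forall_exists_le {ι : Type*} [Fintype ι] {S : Set (ι → ℝ)}
    (hS : S.Finite) {x : ι → ℝ} (h : ∀ w : ι → ℝ, ∃ y ∈ S, ∑ i, w i * x i ≤ ∑ i, w i * y i) :
    x ∈ convexHull ℝ S := by
  classical
  by_contra hx
  obtain ⟨f, u, hfS, hfx⟩ := geometric_hahn_banach_closed_point (convex_convexHull ℝ S)
    (hS.isCompact_convexHull (𝕜 := ℝ)).isClosed hx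
  have hf : ∀ y : ι → ℝ, f y = ∑ i, f (Pi.single i 1) * y i := fun y => by
    have := f.toLinearMap.pi_apply_eq_sum_univ y
    simp only [ContinuousLinearMap.coe_coe, smul_eq_mul] at this
    rw [this]
    refine Finset.sum_congr rfl fun i _ => ?_
    rw [mul_comm]
    congr
    ext j
    simp [Pi.single_apply, eq_comm]
  obtain ⟨y, hyS, hxy⟩ := h fun i => f (Pi.single i 1)
  have := hfS y (subset_convexHull ℝ S hyS)
  rw [hf] at this hfx
  linarith

omit [Fintype α] in
theorem fsum_incVec_s3 (I F : Finset α) : fsum (incVec I) F = (F ∩ I).card := by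
  simp [fsum, incVec, Finset.sum_ite_mem]

omit [Fintype α] [DecidableEq α] in
theorem isLinearMap_fsum (F : Finset α) : IsLinearMap ℝ fun x : α → ℝ => fsum x F where
  map_add x y := by simp [fsum, Finset.sum_add_distrib]
  map_smul c x := by simp [fsum, Finset.mul_sum]

namespace FinMatroid

variable (M : FinMatroid α)

theorem card_le_r {J F : Finset α} (hJ : M.Indep J) (hJF : J ⊆ F) : J.card ≤ M.r F := by
  classical
  exact Finset.le_sup (f := Finset.card) (Finset.mem_filter.2 ⟨Finset.mem_powerset.2 hJF, hJ⟩)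

theorem exists_indep_card_eq_r (F : Finset α) : ∃ J ⊆ F, M.Indep J ∧ J.card = M.r F := by
  classical
  obtain ⟨J, hJ, hJr⟩ := Finset.exists_mem_eq_sup (F.powerset.filter M.Indep)
    ⟨∅, Finset.mem_filter.2 ⟨Finset.empty_mem_powerset F, M.empty_indep⟩⟩ Finset.card
  rw [Finset.mem_filter, Finset.mem_powerset] at hJ
  exact ⟨J, hJ.1, hJ.2, hJr.symm⟩

theorem card_eq_r_of_maximal {B F : Finset α} (hBF : B ⊆ F) (hB : M.Indep B)
    (hmax : ∀ e ∈ F \ B, ¬ M.Indep (insert e B)) : B.card = M.r F := by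
  obtain ⟨J, hJF, hJ, hJr⟩ := M.exists_indep_card_eq_r F
  refine (M.card_le_r hB hBF).antisymm (hJr ▸ not_lt.1 fun hlt => ?_)
  obtain ⟨e, he, heB⟩ := M.exchange hB hJ hlt
  rw [Finset.mem_sdiff] at he
  exact hmax e (Finset.mem_sdiff.2 ⟨hJF he.1, he.2⟩) heB

/-- `B` is a basis of `S` in the truncation of `M` to rank `k`. -/
def IsTruncBasis (k : ℕ) (B S : Finset α) : Prop :=
  B ⊆ S ∧ M.Indep B ∧ B.card ≤ k ∧ ∀ e ∈ S \ B, M.Indep (insert e B) → k ≤ B.card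

variable {M} {k : ℕ} {B S : Finset α}

theorem isTruncBasis_empty (k : ℕ) : M.IsTruncBasis k ∅ ∅ :=
  ⟨subset_rfl, M.empty_indep, by simp, by simp⟩

theorem IsTruncBasis.card_eq_min (h : M.IsTruncBasis k B S) : B.card = min (M.r S) k := by
  obtain ⟨hBS, hB, hBk, hmax⟩ := h
  rcases hBk.lt_or_eq with hlt | rfl
  · have := M.card_eq_r_of_maximal hBS hB fun e he hi => (hmax e he hi).not_gt hlt
    omega
  · exact (min_eq_right (M.card_le_r hB hBS)).symm

theorem IsTruncBasis.exists_insert (h : M.IsTruncBasis k B S) {a : α} (ha : a ∉ S) :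
    ∃ B', M.IsTruncBasis k B' (insert a S) ∧ B' ∩ S = B := by
  obtain ⟨hBS, hB, hBk, hmax⟩ := h
  have haB : a ∉ B := fun h => ha (hBS h)
  by_cases hadd : M.Indep (insert a B) ∧ B.card < k
  · refine ⟨insert a B, ⟨Finset.insert_subset_insert a hBS, hadd.1, ?_, ?_⟩, ?_⟩
    · rw [Finset.card_insert_of_notMem haB]
      exact hadd.2
    · intro e he hi
      have heS : e ∈ S \ B := by
        simp only [Finset.mem_sdiff, Finset.mem_insert, not_or] at he ⊢
        exact ⟨he.1.resolve_left he.2.1, he.2.2⟩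
      exact (hmax e heS (M.subset_indep hi (Finset.insert_subset_insert e
        (Finset.subset_insert a B)))).trans (Finset.card_le_card (Finset.subset_insert a B))
    · rw [Finset.insert_inter_of_notMem ha, Finset.inter_eq_left.2 hBS]
  · refine ⟨B, ⟨hBS.trans (Finset.subset_insert a S), hB, hBk, ?_⟩, Finset.inter_eq_left.2 hBS⟩
    intro e he hi
    rw [Finset.mem_sdiff, Finset.mem_insert] at he
    rcases he with ⟨rfl | heS, heB⟩
    · exact not_lt.1 fun hlt => hadd ⟨hi, hlt⟩
    · exact hmax e (Finset.mem_sdiff.2 ⟨heS, heB⟩) hi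

theorem IsTruncBasis.fsum_le_card (h : M.IsTruncBasis k B S) {x : α → ℝ}
    (hxr : ∀ F : Finset α, F ≠ ∅ → fsum x F ≤ M.r F) (hxk : ∀ F : Finset α, fsum x F ≤ k) :
    fsum x S ≤ B.card := by
  rw [h.card_eq_min, Nat.cast_min]
  rcases S.eq_empty_or_nonempty with rfl | hS
  · simp [fsum]
  · exact le_min (hxr S hS.ne_empty) (hxk S)

theorem IsTruncBasis.sum_incVec_sub (h : M.IsTruncBasis k B S) (x : α → ℝ) :
    ∑ e ∈ S, (incVec B e - x e) = B.card - fsum x S := by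
  rw [Finset.sum_sub_distrib]
  change fsum (incVec B) S - fsum x S = _
  rw [fsum_incVec_s3, Finset.inter_eq_right.2 h.1]

/-- Quantifying over lower bounds `c` of `w` lets the Abel summation run along the induction,
which adds the elements in order of decreasing weight. -/
theorem exists_isTruncBasis_abel_bound {x : α → ℝ}
    (hxr : ∀ F : Finset α, F ≠ ∅ → fsum x F ≤ M.r F) (hxk : ∀ F : Finset α, fsum x F ≤ k)
    (w : α → ℝ) (S : Finset α) :
    ∃ B, M.IsTruncBasis k B S ∧ ∀ c : ℝ, (∀ e ∈ S, c ≤ w e) →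
      c * ∑ e ∈ S, (incVec B e - x e) ≤ ∑ e ∈ S, w e * (incVec B e - x e) := by
  induction S using Finset.induction_on_min_value w with
  | empty => exact ⟨∅, isTruncBasis_empty k, fun c _ => by simp⟩
  | insert a S ha hmin ih =>
    obtain ⟨B, hB, hbound⟩ := ih
    obtain ⟨B', hB', hB'S⟩ := hB.exists_insert ha
    have hincVec : ∀ e ∈ S, incVec B' e = incVec B e := fun e he => by
      simp [incVec, ← hB'S, he]
    refine ⟨B', hB', fun c hc => ?_⟩
    have hsum : ∀ g : α → ℝ, ∑ e ∈ insert a S, g e * (incVec B' e - x e)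
        = g a * (incVec B' a - x a) + ∑ e ∈ S, g e * (incVec B e - x e) := fun g => by
      rw [Finset.sum_insert ha]
      congr 1
      exact Finset.sum_congr rfl fun e he => by rw [hincVec e he]
    have hlevel : 0 ≤ ∑ e ∈ insert a S, (incVec B' e - x e) := by
      rw [hB'.sum_incVec_sub]
      linarith [hB'.fsum_le_card hxr hxk]
    have hcw : c ≤ w a := hc a (Finset.mem_insert_self a S)
    have hprev := hbound (w a) hmin
    have hlevel' := hsum fun _ => 1
    simp only [one_mul] at hlevel'
    rw [hlevel'] at hlevel ⊢
    rw [hsum]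
    calc c * (incVec B' a - x a + ∑ e ∈ S, (incVec B e - x e))
        ≤ w a * (incVec B' a - x a + ∑ e ∈ S, (incVec B e - x e)) :=
          mul_le_mul_of_nonneg_right hcw hlevel
      _ ≤ _ := by linarith

theorem exists_indep_card_eq_sum_mul_le {x : α → ℝ}
    (hxr : ∀ F : Finset α, F ≠ ∅ → fsum x F ≤ M.r F) (hxE : fsum x Finset.univ = k)
    (hx0 : ∀ e, 0 ≤ x e) (w : α → ℝ) :
    ∃ B, M.Indep B ∧ B.card = k ∧ ∑ e, w e * x e ≤ ∑ e, w e * incVec B e := by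
  have hxk : ∀ F : Finset α, fsum x F ≤ k := fun F =>
    hxE ▸ Finset.sum_le_sum_of_subset_of_nonneg (Finset.subset_univ F) fun e _ _ => hx0 e
  obtain ⟨B, hB, hbound⟩ := exists_isTruncBasis_abel_bound hxr hxk w Finset.univ
  have hBk : B.card = k := hB.2.2.1.antisymm (by exact_mod_cast hxE ▸ hB.fsum_le_card hxr hxk)
  refine ⟨B, hB.2.1, hBk, ?_⟩
  have := hbound (⨅ e, w e) fun e _ => ciInf_le (Finite.bddBelow_range w) e
  rw [hB.sum_incVec_sub, hxE, hBk, sub_self, mul_zero] at this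
  simpa [mul_sub, Finset.sum_sub_distrib, sub_nonneg] using this

variable (M k)

theorem convex_setOf_rank_constraints :
    Convex ℝ {x : α → ℝ | (∀ F : Finset α, F ≠ ∅ → fsum x F ≤ (M.r F : ℝ)) ∧
      fsum x Finset.univ = (k : ℝ) ∧ (∀ e : α, 0 ≤ x e)} := by
  simp only [Set.ofPred_and, Set.ofPred_forall]
  exact (convex_iInter fun F => convex_iInter fun _ =>
      convex_halfSpace_le (isLinearMap_fsum F) _).inter
    ((convex_hyperplane (isLinearMap_fsum _) _).inter
      (convex_iInter fun e => convex_halfSpace_ge (LinearMap.proj e).isLinear 0))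

end FinMatroid

theorem exactPolytope_eq_general {α : Type*} [Fintype α] [DecidableEq α]
    (M : FinMatroid α) (k : ℕ) :
    exactPolytope M k =
      {x : α → ℝ | (∀ F : Finset α, F ≠ ∅ → fsum x F ≤ (M.r F : ℝ)) ∧
        fsum x Finset.univ = (k : ℝ) ∧ (∀ e : α, 0 ≤ x e)} := by
  refine (convexHull_min ?_ (M.convex_setOf_rank_constraints k)).antisymm ?_
  · rintro _ ⟨I, hI, rfl, rfl⟩
    refine ⟨fun F _ => ?_, by simp [fsum_incVec_s3], fun e => by unfold incVec; positivity⟩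
    rw [fsum_incVec_s3]
    exact_mod_cast M.card_le_r (M.subset_indep hI Finset.inter_subset_right) Finset.inter_subset_left
  · rintro x ⟨hxr, hxE, hx0⟩
    refine mem_convexHull_of_forall_exists_le ((Set.finite_range incVec).subset ?_) fun w => ?_
    · rintro _ ⟨I, -, -, rfl⟩
      exact ⟨I, rfl⟩
    · obtain ⟨B, hB, hBk, hle⟩ := M.exists_indep_card_eq_sum_mul_le hxr hxE hx0 w
      exact ⟨incVec B, ⟨B, hB, hBk, rfl⟩, hle⟩

/-- linear description of the polytope of independent sets of
cardinality exactly k. -/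
theorem exactPolytope_eq {α : Type*} [Fintype α] [DecidableEq α]
    (M : FinMatroid α) (k : ℕ) (hk : k ≤ M.r Finset.univ) :
    exactPolytope M k =
      {x : α → ℝ | (∀ F : Finset α, F ≠ ∅ → fsum x F ≤ (M.r F : ℝ)) ∧
        fsum x Finset.univ = (k : ℝ) ∧ (∀ e : α, 0 ≤ x e)} :=
  exactPolytope_eq_general M k
end

section
/- Let k be a natural number, let ∅ ≠ F ⊆ E, and suppose F̄ := E∖F is closed with r(F̄) < k < r(E). Let r_k(S) = min(r(S), k) be the rank function of the k-truncation of M and define r_k^k(S) := k − r_k(E∖S) for S ⊆ E. Then F is k-inseparable with respect to r_k: for every partition F = F_1 ∪̇ F_2 with F_1 and F_2 nonempty, r_k^k(F_1) + r_k^k(F_2) < r_k^k(F). -/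
open Finset

variable {α : Type*} [Fintype α] [DecidableEq α]

/-! Submodularity gives `r(F₁ᶜ) + r(F₂ᶜ) ≥ r(E) + r(Fᶜ)`, since `F₁ᶜ ∪ F₂ᶜ = E` and
`F₁ᶜ ∩ F₂ᶜ = Fᶜ`, and closedness of `Fᶜ` gives `r(Fᶜ) < r(Fᵢᶜ)`. Truncating at `k` then leaves
a strict inequality in each of the three cases: both, one or neither of `r(Fᵢᶜ)` below `k`. -/

namespace FinMatroid

variable (M : FinMatroid α)

open Classical in
lemma card_le_r_s5 {I F : Finset α} (hI : M.Indep I) (hIF : I ⊆ F) : I.card ≤ M.r F :=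
  Finset.le_sup (by simp [hIF, hI])

lemma exists_basis (F : Finset α) : ∃ B ⊆ F, M.Indep B ∧ B.card = M.r F := by
  classical
  obtain ⟨B, hB, hcard⟩ :=
    Finset.exists_mem_eq_sup (F.powerset.filter M.Indep) ⟨∅, by simp [M.empty_indep]⟩ card
  simp only [mem_filter, mem_powerset] at hB
  exact ⟨B, hB.1, hB.2, hcard.symm⟩

lemma r_mono {A B : Finset α} (h : A ⊆ B) : M.r A ≤ M.r B := by
  obtain ⟨I, hIA, hI, hcard⟩ := M.exists_basis A
  exact hcard ▸ M.card_le_r_s5 hI (hIA.trans h)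

lemma exists_basis_superset {I F : Finset α} (hI : M.Indep I) (hIF : I ⊆ F) :
    ∃ J, I ⊆ J ∧ J ⊆ F ∧ M.Indep J ∧ J.card = M.r F := by
  classical
  obtain ⟨J, hJ, hJmax⟩ := Finset.exists_max_image
    (F.powerset.filter fun J => I ⊆ J ∧ M.Indep J) card ⟨I, by simp [hIF, hI]⟩
  simp only [mem_filter, mem_powerset] at hJ hJmax
  obtain ⟨hJF, hIJ, hJ⟩ := hJ
  refine ⟨J, hIJ, hJF, hJ, le_antisymm (M.card_le_r_s5 hJ hJF) ?_⟩
  by_contra! hlt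
  obtain ⟨B, hBF, hB, hBcard⟩ := M.exists_basis F
  obtain ⟨e, he, heJ⟩ := M.exchange hJ hB (hBcard ▸ hlt)
  rw [mem_sdiff] at he
  have := hJmax (insert e J) ⟨insert_subset (hBF he.1) hJF, hIJ.trans (subset_insert e J), heJ⟩
  rw [card_insert_of_notMem he.2] at this
  omega

/-- Extend a basis of `A ∩ B` to one of `A ∪ B` and split it along `A` and `B`. -/
lemma r_union_add_r_inter_le (A B : Finset α) :
    M.r (A ∪ B) + M.r (A ∩ B) ≤ M.r A + M.r B := by
  obtain ⟨I, hIAB, hI, hIcard⟩ := M.exists_basis (A ∩ B)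
  obtain ⟨J, hIJ, hJAB, hJ, hJcard⟩ :=
    M.exists_basis_superset hI (hIAB.trans (inter_subset_left.trans subset_union_left))
  have hA : (J ∩ A).card ≤ M.r A :=
    M.card_le_r_s5 (M.subset_indep hJ inter_subset_left) inter_subset_right
  have hB : (J ∩ B).card ≤ M.r B :=
    M.card_le_r_s5 (M.subset_indep hJ inter_subset_left) inter_subset_right
  have hinter : M.r (A ∩ B) ≤ (J ∩ A ∩ (J ∩ B)).card := by
    rw [← hIcard, ← inter_inter_distrib_left]
    exact card_le_card (subset_inter hIJ hIAB)
  have hunion : J ∩ A ∪ J ∩ B = J := by rwa [← inter_union_distrib_left, inter_eq_left]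
  have := card_union_add_card_inter (J ∩ A) (J ∩ B)
  rw [hunion] at this
  omega

variable {M}

lemma ClosedSet.r_lt_of_ssubset {C D : Finset α} (hC : M.ClosedSet C) (hCD : C ⊂ D) :
    M.r C < M.r D := by
  obtain ⟨e, heD, heC⟩ := exists_of_ssubset hCD
  exact (hC e heC).trans_le (M.r_mono (insert_subset heD hCD.subset))

end FinMatroid

theorem kInseparable_of_compl_closed_general {α : Type*} [Fintype α] [DecidableEq α]
    (M : FinMatroid α) (k : ℕ) (F : Finset α)
    (hclosed : M.ClosedSet Fᶜ) (h1 : M.r Fᶜ < k) (h2 : k < M.r Finset.univ) :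
    ∀ F₁ F₂ : Finset α, F₁ ≠ ∅ → F₂ ≠ ∅ → Disjoint F₁ F₂ → F₁ ∪ F₂ = F →
      ((k : ℤ) - (min (M.r F₁ᶜ) k : ℤ)) + ((k : ℤ) - (min (M.r F₂ᶜ) k : ℤ))
        < (k : ℤ) - (min (M.r Fᶜ) k : ℤ) := by
  rintro F₁ F₂ hF₁ hF₂ hdisj rfl
  have hsubmod := M.r_union_add_r_inter_le F₁ᶜ F₂ᶜ
  rw [← compl_inter, disjoint_iff_inter_eq_empty.1 hdisj, compl_empty, ← compl_union] at hsubmod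
  have hlt₁ : M.r (F₁ ∪ F₂)ᶜ < M.r F₁ᶜ := hclosed.r_lt_of_ssubset <|
    compl_ssubset_compl.2 <| left_lt_sup.2 fun h => hF₂ (hdisj.eq_bot_of_ge h)
  have hlt₂ : M.r (F₁ ∪ F₂)ᶜ < M.r F₂ᶜ := hclosed.r_lt_of_ssubset <|
    compl_ssubset_compl.2 <| right_lt_sup.2 fun h => hF₁ (hdisj.eq_bot_of_le h)
  omega

/-- if the complement of F is closed with r(E∖F) < k < r(E), then
F is k-inseparable with respect to the rank function of the k-truncation. -/
theorem kInseparable_of_compl_closed {α : Type*} [Fintype α] [DecidableEq α]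
    (M : FinMatroid α) (k : ℕ) (F : Finset α) (hF : F ≠ ∅)
    (hclosed : M.ClosedSet Fᶜ) (h1 : M.r Fᶜ < k) (h2 : k < M.r Finset.univ) :
    ∀ F₁ F₂ : Finset α, F₁ ≠ ∅ → F₂ ≠ ∅ → Disjoint F₁ F₂ → F₁ ∪ F₂ = F →
      ((k : ℤ) - (min (M.r F₁ᶜ) k : ℤ)) + ((k : ℤ) - (min (M.r F₂ᶜ) k : ℤ))
        < (k : ℤ) - (min (M.r Fᶜ) k : ℤ) :=
  kInseparable_of_compl_closed_general M k F hclosed h1 h2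
end

section
/- For every p ∈ {1, …, m}, the dimension of P^c(E) is at least the dimension of P^{(c_p)}(E) plus one. -/
/-! `P^(c_p)(E)` is a nonempty subset of `P^c(E)` lying in the hyperplane `x(E) = c_p`. Since `m ≥ 2`
and `c` is strictly increasing, some `c_q ≠ c_p` is at most `r(E)`, so `P^c(E)` contains the incidence
vector of an independent set of size `c_q`, which is off that hyperplane; hence the affine hull of
`P^c(E)` is strictly larger than that of `P^(c_p)(E)`. -/

open Finset

variable {α : Type*} [Fintype α] [DecidableEq α]

theorem FinMatroid.exists_indep_card_eq (M : FinMatroid α) {k : ℕ} (hk : k ≤ M.r univ) :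
    ∃ I : Finset α, M.Indep I ∧ I.card = k := by
  classical
  have hne : (univ.powerset.filter M.Indep).Nonempty :=
    ⟨∅, mem_filter.2 ⟨empty_mem_powerset _, M.empty_indep⟩⟩
  obtain ⟨J, hJ, hJcard⟩ := exists_mem_eq_sup _ hne Finset.card
  have hk' : k ≤ J.card := by rwa [FinMatroid.r, hJcard] at hk
  obtain ⟨I, hIJ, hIcard⟩ := exists_subset_card_eq hk'
  exact ⟨I, M.subset_indep (mem_filter.1 hJ).2 hIJ, hIcard⟩

theorem sum_incVec (I : Finset α) : ∑ e, incVec I e = I.card := by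
  simp [incVec]

theorem sum_eq_of_mem_affineSpan {ι : Type*} [Fintype ι] {s : Set (ι → ℝ)} {r : ℝ}
    (hs : ∀ x ∈ s, ∑ i, x i = r) {x : ι → ℝ} (hx : x ∈ affineSpan ℝ s) : ∑ i, x i = r := by
  let total : (ι → ℝ) →ᵃ[ℝ] ℝ := (∑ i, LinearMap.proj i : (ι → ℝ) →ₗ[ℝ] ℝ).toAffineMap
  have hagree : s.EqOn total (AffineMap.const ℝ (ι → ℝ) r) := fun y hy => by
    simpa [total] using hs y hy
  simpa [total] using AffineMap.eqOn_affineSpan hagree hx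

theorem polyDim_lt_of_notMem_affineSpan {ι : Type*} [Fintype ι] {s t : Set (ι → ℝ)}
    (hst : s ⊆ t) (hs : s.Nonempty) {x : ι → ℝ} (hxt : x ∈ t) (hxs : x ∉ affineSpan ℝ s) :
    polyDim s < polyDim t := by
  have hlt : affineSpan ℝ s < affineSpan ℝ t :=
    lt_of_le_of_ne (affineSpan_mono ℝ hst) fun h => hxs (h ▸ subset_affineSpan ℝ t hxt)
  exact Submodule.finrank_lt_finrank_of_lt
    (AffineSubspace.direction_lt_of_nonempty hlt (hs.mono (subset_affineSpan ℝ s)))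

section Polytopes

variable (M : FinMatroid α)

theorem incVec_mem_exactPolytope {I : Finset α} (hI : M.Indep I) :
    incVec I ∈ exactPolytope M I.card :=
  subset_convexHull ℝ _ ⟨I, hI, rfl, rfl⟩

theorem incVec_mem_cardPolytope {m : ℕ} (c : Fin m → ℕ) {I : Finset α} (hI : M.Indep I)
    (p : Fin m) (hIp : I.card = c p) : incVec I ∈ cardPolytope M c :=
  subset_convexHull ℝ _ ⟨I, hI, ⟨p, hIp⟩, rfl⟩

theorem exactPolytope_subset_cardPolytope {m : ℕ} (c : Fin m → ℕ) (p : Fin m) :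
    exactPolytope M (c p) ⊆ cardPolytope M c :=
  convexHull_mono fun _ ⟨I, hI, hIp, hx⟩ => ⟨I, hI, ⟨p, hIp⟩, hx⟩

theorem sum_eq_of_mem_affineSpan_exactPolytope {k : ℕ} {x : α → ℝ}
    (hx : x ∈ affineSpan ℝ (exactPolytope M k)) : ∑ e, x e = k := by
  rw [exactPolytope, affineSpan_convexHull] at hx
  refine sum_eq_of_mem_affineSpan ?_ hx
  rintro _ ⟨I, -, hIk, rfl⟩
  rw [sum_incVec, hIk]

end Polytopes

/-- dim P^c(E) ≥ dim P^(c_p)(E) + 1 for every p. -/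
theorem cardPolytope_dim_ge {α : Type*} [Fintype α] [DecidableEq α]
    (M : FinMatroid α)
    {m : ℕ} (c : Fin m → ℕ) (hm : 2 ≤ m) (hmono : StrictMono c)
    (hlast : c ⟨m - 1, by omega⟩ ≤ M.r Finset.univ)
    (p : Fin m) :
    polyDim (exactPolytope M (c p)) + 1 ≤ polyDim (cardPolytope M c) := by
  have hrank : ∀ q : Fin m, c q ≤ M.r univ := fun q =>
    (hmono.monotone (Fin.mk_le_mk.2 (by omega))).trans hlast
  have : Nontrivial (Fin m) := Fin.nontrivial_iff_two_le.2 hm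
  obtain ⟨q, hqp⟩ := exists_ne p
  obtain ⟨Ip, hIp, hIpc⟩ := M.exists_indep_card_eq (hrank p)
  obtain ⟨Iq, hIq, hIqc⟩ := M.exists_indep_card_eq (hrank q)
  refine polyDim_lt_of_notMem_affineSpan (exactPolytope_subset_cardPolytope M c p)
    ⟨incVec Ip, hIpc ▸ incVec_mem_exactPolytope M hIp⟩
    (incVec_mem_cardPolytope M c hIq q hIqc) fun hmem => hqp (hmono.injective ?_)
  have hsum := sum_eq_of_mem_affineSpan_exactPolytope M hmem
  rw [sum_incVec, hIqc] at hsum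
  exact_mod_cast hsum
end

section
/- Let x* ∈ ℝ^E with x* ≥ 0 satisfy all rank inequalities x*(F) ≤ r(F) for nonempty F ⊆ E. If for some F ⊆ E with c_p < r(F) < c_{p+1} (for some p ∈ {1, …, m−1}) the rank induced forbidden set inequality is violated by x*, i.e., (c_{p+1} − r(F))·x*(F) − (r(F) − c_p)·x*(E∖F) > c_p·(c_{p+1} − r(F)), then c_p < x*(E) < c_{p+1}. -/
open Finset

variable {α : Type*} [Fintype α] [DecidableEq α]

/-! The coefficients `a = c_{p+1} - r(F)` and `b = r(F) - c_p` of the forbidden set inequality are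
positive. Dropping `b·x(E∖F) ≥ 0` from the violated inequality gives `c_p < x(F)`; bounding `x(F)` by
`r(F)` instead gives `b·x(E∖F) < a·b`, i.e. `x(E∖F) < c_{p+1} - r(F)`. Adding up, `x(E) = x(F) + x(E∖F)`
lies strictly between `c_p` and `c_{p+1}`. -/

theorem FinMatroid.r_empty (M : FinMatroid α) : M.r ∅ = 0 := by
  simp [FinMatroid.r]

theorem fsum_nonneg {β : Type*} {x : β → ℝ} (hx : ∀ e, 0 ≤ x e) (S : Finset β) : 0 ≤ fsum x S :=
  Finset.sum_nonneg fun e _ => hx e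

theorem fsum_add_fsum_compl (x : α → ℝ) (S : Finset α) : fsum x S + fsum x Sᶜ = fsum x univ :=
  Finset.sum_add_sum_compl S x

theorem lt_add_and_add_lt_of_forbidden_violation {lo r hi y z : ℝ} (hlo : lo < r) (hhi : r < hi)
    (hz : 0 ≤ z) (hy : y ≤ r) (hviol : lo * (hi - r) < (hi - r) * y - (r - lo) * z) :
    lo < y + z ∧ y + z < hi := by
  have ha : 0 < hi - r := sub_pos.mpr hhi
  have hb : 0 < r - lo := sub_pos.mpr hlo
  constructor
  · have hy_gt : lo < y := by nlinarith
    linarith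
  · have hz_lt : z < hi - r := by nlinarith
    linarith

/-- a violated forbidden set inequality forces
c_p < x*(E) < c_(p+1). -/
theorem violation_forces_cardinality_window {α : Type*} [Fintype α] [DecidableEq α]
    (M : FinMatroid α)
    {m : ℕ} (c : Fin m → ℕ)
    (x : α → ℝ) (hnn : ∀ e : α, 0 ≤ x e)
    (hrank : ∀ F : Finset α, F ≠ ∅ → fsum x F ≤ (M.r F : ℝ))
    (F : Finset α) (p : Fin m) (hp : p.val + 1 < m)
    (h1 : c p < M.r F) (h2 : M.r F < c ⟨p.val + 1, hp⟩)
    (hviol : (c p : ℝ) * ((c ⟨p.val + 1, hp⟩ : ℝ) - M.r F) < ((c ⟨p.val + 1, hp⟩ : ℝ) - M.r F) * fsum x F - ((M.r F : ℝ) - c p) * fsum x Fᶜ) :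
    (c p : ℝ) < fsum x Finset.univ ∧ fsum x Finset.univ < (c ⟨p.val + 1, hp⟩ : ℝ) := by
  have hF : F ≠ ∅ := by
    rintro rfl
    simp [M.r_empty] at h1
  rw [← fsum_add_fsum_compl x F]
  exact lt_add_and_add_lt_of_forbidden_violation (by exact_mod_cast h1) (by exact_mod_cast h2)
    (fsum_nonneg hnn Fᶜ) (hrank F hF) hviol
end

section
/- Let x* ∈ ℝ^E with x* ≥ 0 and suppose c_p < x*(E) < c_{p+1} for some p ∈ {1, …, m−1}. Set δ := (x*(E) − c_p)/(c_{p+1} − c_p), so 0 < δ < 1. Then for every F ⊆ E, the following are equivalent: (c_{p+1} − r(F))·x*(F) − (r(F) − c_p)·x*(E∖F) > c_p·(c_{p+1} − r(F)) if and only if (1/δ)·x*(F) − r(F) > c_p·(1 − δ)/δ. In particular, the separation problem for the rank induced forbidden set inequalities reduces to maximizing x'(F) − r(F) over F ⊆ E for the scaled vector x' := (1/δ)·x*. -/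
open Finset

variable {α : Type*} [Fintype α] [DecidableEq α]

/-! Writing `a = c_p`, `b = c_{p+1}`, `s = x(E)` and `y = x(F)`, the gap of the forbidden set
inequality, `(b - r) y - (r - a) (s - y) - a (b - r)`, equals `(b - a) (y - (a (1 - δ) + r δ))` once
`δ (b - a) = s - a`. As `b - a > 0` and `δ > 0`, both inequalities say `y > a (1 - δ) + r δ`. -/

theorem fsum_compl (x : α → ℝ) (F : Finset α) : fsum x Fᶜ = fsum x univ - fsum x F := by
  rw [eq_sub_iff_add_eq]
  exact sum_compl_add_sum F x

theorem div_sub_mem_Ioo_of_lt_of_lt {a s b : ℝ} (has : a < s) (hsb : s < b) :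
    (s - a) / (b - a) ∈ Set.Ioo 0 1 :=
  ⟨div_pos (sub_pos.2 has) (sub_pos.2 (has.trans hsb)),
    (div_lt_one (sub_pos.2 (has.trans hsb))).2 (by linarith)⟩

theorem forbidden_gap_eq {a b s δ r y : ℝ} (hδ : δ * (b - a) = s - a) :
    (b - r) * y - (r - a) * (s - y) - a * (b - r) = (b - a) * (y - (a * (1 - δ) + r * δ)) := by
  linear_combination (r - a) * hδ

theorem lt_one_div_mul_sub_iff {a δ r y : ℝ} (hδ : 0 < δ) :
    a * (1 - δ) / δ < 1 / δ * y - r ↔ a * (1 - δ) + r * δ < y := by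
  rw [one_div_mul_eq_div, lt_sub_iff_add_lt, div_add' _ _ _ hδ.ne', div_lt_div_iff_of_pos_right hδ]

theorem forbidden_iff_scaled {a b s δ r y : ℝ} (hab : a < b) (hδ0 : 0 < δ)
    (hδ : δ * (b - a) = s - a) :
    a * (b - r) < (b - r) * y - (r - a) * (s - y) ↔ a * (1 - δ) / δ < 1 / δ * y - r := by
  rw [← sub_pos, forbidden_gap_eq hδ, mul_pos_iff_of_pos_left (sub_pos.2 hab), sub_pos,
    lt_one_div_mul_sub_iff hδ0]

/-- the separation problem for the forbidden set inequalities
reduces to maximizing x'(F) - r(F) for the scaled vector x' = (1/δ)·x*. -/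
theorem separation_scaling_equivalence {α : Type*} [Fintype α] [DecidableEq α]
    (M : FinMatroid α)
    {m : ℕ} (c : Fin m → ℕ)
    (x : α → ℝ)
    (p : Fin m) (hp : p.val + 1 < m)
    (hlo : (c p : ℝ) < fsum x Finset.univ)
    (hhi : fsum x Finset.univ < (c ⟨p.val + 1, hp⟩ : ℝ))
    (δ : ℝ) (hδ : δ = (fsum x Finset.univ - (c p : ℝ)) / ((c ⟨p.val + 1, hp⟩ : ℝ) - (c p : ℝ))) :
    0 < δ ∧ δ < 1 ∧
    ∀ F : Finset α,
      ((c p : ℝ) * ((c ⟨p.val + 1, hp⟩ : ℝ) - M.r F) < ((c ⟨p.val + 1, hp⟩ : ℝ) - M.r F) * fsum x F - ((M.r F : ℝ) - c p) * fsum x Fᶜ ↔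
        (c p : ℝ) * (1 - δ) / δ < (1 / δ) * fsum x F - (M.r F : ℝ)) := by
  have hab := hlo.trans hhi
  obtain ⟨hδ0, hδ1⟩ : δ ∈ Set.Ioo 0 1 := hδ ▸ div_sub_mem_Ioo_of_lt_of_lt hlo hhi
  have hscale : δ * ((c ⟨p.val + 1, hp⟩ : ℝ) - c p) = fsum x univ - c p := by
    rw [hδ, div_mul_cancel₀ _ (sub_pos.2 hab).ne']
  refine ⟨hδ0, hδ1, fun F => ?_⟩
  rw [fsum_compl]
  exact forbidden_iff_scaled hab hδ0 hscale
end
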